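/- arXiv:2310.07614 — 2 statements merged into one kernel-verified Lean document; each statement's English description precedes it below -/
import Mathlib

section
/- In a meet-tree, if X is a finite nonempty subset and x ∉ X, then the meet-subsemilattice generated by X ∪ {x} equals ⟨X⟩ ∪ {e, x}, where ⟨X⟩ is the meet-subsemilattice generated by X and e := max{x ⊓ y : y ∈ X}. Consequently, by induction, the subsemilattice generated by a finite set X has cardinality at most 2|X| − 1 (for X nonempty). -/
/-- The meet-subsemilattice generated by a set `X`. -/
inductive MeetGen {T : Type*} [SemilatticeInf T] (X : Set T) : T → Prop
  | base {x : T} : x ∈ X → MeetGen X x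
  | inf {a b : T} : MeetGen X a → MeetGen X b → MeetGen X (a ⊓ b)

section Aux

variable {T : Type*} [SemilatticeInf T]

lemma meetGen_mono {X Y : Set T} (h : X ⊆ Y) {a : T} (ha : MeetGen X a) : MeetGen Y a := by
  induction ha with
  | base hx => exact MeetGen.base (h hx)
  | inf _ _ iha ihb => exact MeetGen.inf iha ihb

lemma meetGen_singleton {y t : T} (ht : MeetGen {y} t) : t = y := by
  induction ht with
  | base hx => exact hx
  | inf _ _ iha ihb => rw [iha, ihb, inf_idem]

lemma comp_below (hsl : ∀ a : T, IsChain (· ≤ ·) {x : T | x < a})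
    {u v c : T} (hu : u ≤ c) (hv : v ≤ c) : u ≤ v ∨ v ≤ u := by
  rcases eq_or_lt_of_le hu with rfl | hu'
  · exact Or.inr hv
  rcases eq_or_lt_of_le hv with rfl | hv'
  · exact Or.inl hu
  rcases eq_or_ne u v with rfl | hne
  · exact Or.inl le_rfl
  exact hsl c hu' hv' hne

lemma inf_le_e {X : Set T} {x e : T} (he : IsGreatest ((fun y => x ⊓ y) '' X) e)
    {a : T} (ha : MeetGen X a) : x ⊓ a ≤ e := by
  induction ha with
  | base hx => exact he.2 ⟨_, hx, rfl⟩
  | inf _ _ iha ihb =>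
      exact le_trans (le_inf inf_le_left (le_trans inf_le_right inf_le_left)) iha

lemma inf_mem (hsl : ∀ a : T, IsChain (· ≤ ·) {x : T | x < a})
    {X : Set T} {x e : T} (he : IsGreatest ((fun y => x ⊓ y) '' X) e)
    {a : T} (ha : MeetGen X a) : MeetGen X (x ⊓ a) ∨ x ⊓ a = e := by
  obtain ⟨y₀, hy₀, hey⟩ := he.1
  have hex : e ≤ x := by rw [← hey]; exact inf_le_left
  have hey₀ : e ≤ y₀ := by rw [← hey]; exact inf_le_right
  have hle : x ⊓ a ≤ e := inf_le_e he ha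
  rcases comp_below hsl (inf_le_right : a ⊓ y₀ ≤ y₀) hey₀ with h | h
  · -- a ⊓ y₀ ≤ e : then x ⊓ a = a ⊓ y₀ ∈ ⟨X⟩
    left
    have : x ⊓ a = a ⊓ y₀ := le_antisymm
      (le_inf inf_le_right (le_trans hle hey₀))
      (le_inf (le_trans h hex) inf_le_left)
    rw [this]
    exact MeetGen.inf ha (MeetGen.base hy₀)
  · -- e ≤ a ⊓ y₀ : then x ⊓ a = e
    right
    exact le_antisymm hle (le_inf hex (le_trans h inf_le_left))

lemma meetGen_union_eq (hsl : ∀ a : T, IsChain (· ≤ ·) {x : T | x < a})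
    {X : Set T} {x e : T} (he : IsGreatest ((fun y => x ⊓ y) '' X) e) :
    {t : T | MeetGen (X ∪ {x}) t} = {t : T | MeetGen X t} ∪ {e, x} := by
  obtain ⟨y₀, hy₀, hey⟩ := he.1
  have hex : e ≤ x := by rw [← hey]; exact inf_le_left
  -- key closure fact
  have key : ∀ a : T, MeetGen X a → MeetGen X (a ⊓ x) ∨ a ⊓ x = e := by
    intro a ha; rw [inf_comm]; exact inf_mem hsl he ha
  have keyE : ∀ a : T, MeetGen X a → MeetGen X (a ⊓ e) ∨ a ⊓ e = e := by
    intro a ha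
    have : a ⊓ e = a ⊓ x := le_antisymm
      (le_inf inf_le_left (le_trans inf_le_right hex))
      (by rw [inf_comm a x]; exact le_inf inf_le_right (inf_le_e he ha))
    rw [this]; exact key a ha
  ext t
  simp only [Set.mem_setOf_eq, Set.mem_union, Set.mem_insert_iff, Set.mem_singleton_iff]
  constructor
  · intro ht
    induction ht with
    | base hx =>
        rcases hx with hx | hx
        · exact Or.inl (MeetGen.base hx)
        · exact Or.inr (Or.inr hx)
    | inf ha hb iha ihb =>
        rcases iha with ha' | rfl | rfl
        · rcases ihb with hb' | rfl | rfl
          · exact Or.inl (MeetGen.inf ha' hb')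
          · rcases keyE _ ha' with h | h
            · exact Or.inl h
            · exact Or.inr (Or.inl h)
          · rcases key _ ha' with h | h
            · exact Or.inl h
            · exact Or.inr (Or.inl h)
        · rcases ihb with hb' | rfl | rfl
          · rw [inf_comm]
            rcases keyE _ hb' with h | h
            · exact Or.inl h
            · exact Or.inr (Or.inl h)
          · rw [inf_idem]; exact Or.inr (Or.inl rfl)
          · rw [inf_eq_left.mpr hex]; exact Or.inr (Or.inl rfl)
        · rcases ihb with hb' | rfl | rfl
          · rw [inf_comm]
            rcases key _ hb' with h | h
            · exact Or.inl h
            · exact Or.inr (Or.inl h)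
          · rw [inf_eq_right.mpr hex]; exact Or.inr (Or.inl rfl)
          · rw [inf_idem]; exact Or.inr (Or.inr rfl)
  · rintro (ht | rfl | rfl)
    · exact meetGen_mono Set.subset_union_left ht
    · rw [← hey]
      exact MeetGen.inf (MeetGen.base (Or.inr rfl)) (MeetGen.base (Or.inl hy₀))
    · exact MeetGen.base (Or.inr rfl)

lemma meetGen_card (hsl : ∀ a : T, IsChain (· ≤ ·) {x : T | x < a}) :
    ∀ Y : Set T, Y.Finite → Y.Nonempty →
      {t : T | MeetGen Y t}.Finite ∧ {t : T | MeetGen Y t}.ncard ≤ 2 * Y.ncard - 1 := by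
  intro Y hY
  induction Y, hY using Set.Finite.induction_on with
  | empty => intro h; exact absurd rfl h.ne_empty
  | @insert a s has hs ih =>
      intro _
      rcases s.eq_empty_or_nonempty with rfl | hsne
      · have h1 : {t : T | MeetGen (insert a (∅ : Set T)) t} = {a} := by
          have hset : insert a (∅ : Set T) = {a} := by simp
          rw [hset]
          ext t
          simp only [Set.mem_setOf_eq, Set.mem_singleton_iff]
          exact ⟨meetGen_singleton, fun h => h ▸ MeetGen.base rfl⟩
        rw [h1]
        simp
      · obtain ⟨hfin, hcard⟩ := ih hsne
        -- get greatest element e of (a ⊓ ·) '' s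
        have himg : ((fun y => a ⊓ y) '' s).Finite := hs.image _
        obtain ⟨e, heM, hemax⟩ := Set.Finite.exists_maximalFor id _ himg (hsne.image _)
        have he : IsGreatest ((fun y => a ⊓ y) '' s) e := by
          refine ⟨heM, fun b hb => ?_⟩
          have hba : b ≤ a := by obtain ⟨yb, _, rfl⟩ := hb; exact inf_le_left
          have hea : e ≤ a := by obtain ⟨ye, _, rfl⟩ := heM; exact inf_le_left
          rcases comp_below hsl hba hea with h | h
          · exact h
          · exact hemax hb h
        have heq : {t : T | MeetGen (insert a s) t} = {t : T | MeetGen s t} ∪ {e, a} := by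
          rw [← Set.union_singleton]
          exact meetGen_union_eq hsl he
        have hfin2 : ({e, a} : Set T).Finite := (Set.finite_singleton a).insert e
        constructor
        · rw [heq]; exact hfin.union hfin2
        · have hn : 1 ≤ s.ncard := hsne.ncard_pos hs
          have h2 : ({e, a} : Set T).ncard ≤ 2 :=
            le_trans (Set.ncard_insert_le e {a}) (by simp)
          have h3 := Set.ncard_union_le {t : T | MeetGen s t} ({e, a} : Set T)
          rw [heq, Set.ncard_insert_of_notMem has hs]
          omega

end Aux

/-- In a meet-tree, for a finite nonempty `X` and `x ∉ X`, the meet-subsemilattice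
generated by `X ∪ {x}` is `⟨X⟩ ∪ {e, x}` where `e = max {x ⊓ y : y ∈ X}`.
Consequently, the subsemilattice generated by a finite nonempty set `Y` has at
most `2|Y| - 1` elements. -/
theorem meetGen_insert {T : Type*} [SemilatticeInf T]
    (hsl : ∀ a : T, IsChain (· ≤ ·) {x : T | x < a})
    (X : Set T) (hX : X.Finite) (hne : X.Nonempty) (x : T) (hx : x ∉ X)
    (e : T) (he : IsGreatest ((fun y => x ⊓ y) '' X) e) :
    {t : T | MeetGen (X ∪ {x}) t} = {t : T | MeetGen X t} ∪ {e, x} ∧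
    ∀ Y : Set T, Y.Finite → Y.Nonempty →
      {t : T | MeetGen Y t}.ncard ≤ 2 * Y.ncard - 1 := by
  exact ⟨meetGen_union_eq hsl he, fun Y hY hYne => (meetGen_card hsl Y hY hYne).2⟩
end

section
/- Let T be a meet-tree and γ a point. The γ-cone-independence relation satisfies the independent generation property: if A is γ-cone-independent of B over C, then the meet-subsemilattice generated by A ∪ B ∪ C ∪ {γ} equals the union of the ones generated by A ∪ C ∪ {γ} and by B ∪ C ∪ {γ}. -/
/-- `⟨X⟩_γ`: the meet-subsemilattice generated by `X ∪ {γ}`. -/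
def clγ {T : Type*} [SemilatticeInf T] (γ : T) (X : Set T) : Set T :=
  {t : T | MeetGen (X ∪ {γ}) t}

/-- The union of the open cones above `γ` of the elements of `X` that are
strictly above `γ`. -/
def coneSet {T : Type*} [SemilatticeInf T] (γ : T) (X : Set T) : Set T :=
  {y : T | γ < y ∧ ∃ x ∈ X, γ < x ∧ γ < y ⊓ x}

/-- `A` is `γ`-cone-independent of `B` over `C`. -/
def ConeIndep {T : Type*} [SemilatticeInf T] (γ : T) (A C B : Set T) : Prop :=
  (∀ a ∈ clγ γ (A ∪ C), ∀ b ∈ clγ γ (B ∪ C), b ≤ a →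
      ∃ c ∈ clγ γ C, b ≤ c ∧ c ≤ a) ∧
  (∀ a ∈ clγ γ (A ∪ C), ∀ b ∈ clγ γ (B ∪ C), a ⊓ b ∉ clγ γ C →
      ∃ c ∈ clγ γ C, a ⊓ c ≠ b ⊓ c)
theorem MeetGen.mono {T : Type*} [SemilatticeInf T] {X Y : Set T} (hXY : X ⊆ Y) {t : T}
    (ht : MeetGen X t) : MeetGen Y t := by
  induction ht with
  | base hx => exact .base (hXY hx)
  | inf _ _ iha ihb => exact .inf iha ihb

theorem clγ_mono {T : Type*} [SemilatticeInf T] (γ : T) {X Y : Set T} (hXY : X ⊆ Y) :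
    clγ γ X ⊆ clγ γ Y := fun _ ht => ht.mono (Set.union_subset_union_left _ hXY)

theorem le_comparable {T : Type*} [SemilatticeInf T]
    (hsl : ∀ a : T, IsChain (· ≤ ·) {x : T | x < a})
    {x y c : T} (hx : x ≤ c) (hy : y ≤ c) : x ≤ y ∨ y ≤ x := by
  rcases eq_or_ne x y with rfl | hne
  · exact Or.inl le_rfl
  rcases hx.lt_or_eq with hx' | rfl
  · rcases hy.lt_or_eq with hy' | rfl
    · exact hsl c hx' hy' hne
    · exact Or.inl hx
  · exact Or.inr hy

theorem inf_eq_of_lt {T : Type*} [SemilatticeInf T]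
    (hsl : ∀ a : T, IsChain (· ≤ ·) {x : T | x < a})
    {a b c : T} (hlt : a ⊓ c < b ⊓ c) : a ⊓ b = a ⊓ c := by
  have h1 : a ⊓ c ≤ a ⊓ b := le_inf inf_le_left (hlt.le.trans inf_le_left)
  rcases le_comparable hsl (inf_le_right : a ⊓ b ≤ b) (inf_le_left : b ⊓ c ≤ b) with h2 | h2
  · exact le_antisymm (le_inf inf_le_left (h2.trans inf_le_right)) h1
  · exact absurd (le_inf (h2.trans inf_le_left) inf_le_right) hlt.not_ge

theorem three_points {T : Type*} [SemilatticeInf T]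
    (hsl : ∀ a : T, IsChain (· ≤ ·) {x : T | x < a})
    {a b c : T} (hne : a ⊓ c ≠ b ⊓ c) : a ⊓ b = a ⊓ c ∨ a ⊓ b = b ⊓ c := by
  rcases le_comparable hsl (inf_le_right : a ⊓ c ≤ c) (inf_le_right : b ⊓ c ≤ c) with hc | hc
  · exact Or.inl (inf_eq_of_lt hsl (hc.lt_of_ne hne))
  · have := inf_eq_of_lt hsl (hc.lt_of_ne (Ne.symm hne))
    exact Or.inr (by rw [inf_comm a b]; exact this)

/-- Independent generation property: if `A ⫝^γ_C B` then
`⟨A ∪ B ∪ C⟩_γ = ⟨A ∪ C⟩_γ ∪ ⟨B ∪ C⟩_γ`. -/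
theorem coneIndep_generated {T : Type*} [SemilatticeInf T]
    (hsl : ∀ a : T, IsChain (· ≤ ·) {x : T | x < a})
    (γ : T) (A B C : Set T) (h : ConeIndep γ A C B) :
    clγ γ (A ∪ B ∪ C) = clγ γ (A ∪ C) ∪ clγ γ (B ∪ C) := by
  have hAC : clγ γ C ⊆ clγ γ (A ∪ C) := clγ_mono γ Set.subset_union_right
  have hBC : clγ γ C ⊆ clγ γ (B ∪ C) := clγ_mono γ Set.subset_union_right
  -- the hard case: a ∈ ⟨A∪C⟩, b ∈ ⟨B∪C⟩
  have key : ∀ a ∈ clγ γ (A ∪ C), ∀ b ∈ clγ γ (B ∪ C),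
      a ⊓ b ∈ clγ γ (A ∪ C) ∪ clγ γ (B ∪ C) := by
    intro a ha b hb
    by_cases hmem : a ⊓ b ∈ clγ γ C
    · exact Or.inl (hAC hmem)
    · obtain ⟨c, hc, hne⟩ := h.2 a ha b hb hmem
      rcases three_points hsl hne with heq | heq
      · exact Or.inl (heq ▸ MeetGen.inf ha (hAC hc))
      · exact Or.inr (heq ▸ MeetGen.inf hb (hBC hc))
  ext t
  constructor
  · intro ht
    induction ht with
    | base hx =>
      rcases hx with (((hx | hx) | hx) | hx)
      · exact Or.inl (.base (Or.inl (Or.inl hx)))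
      · exact Or.inr (.base (Or.inl (Or.inl hx)))
      · exact Or.inl (.base (Or.inl (Or.inr hx)))
      · exact Or.inl (.base (Or.inr hx))
    | inf _ _ iha ihb =>
      rcases iha with ha | ha <;> rcases ihb with hb | hb
      · exact Or.inl (.inf ha hb)
      · exact key _ ha _ hb
      · rw [inf_comm]; exact key _ hb _ ha
      · exact Or.inr (.inf ha hb)
  · rintro (ht | ht)
    · exact ht.mono (Set.union_subset_union_left _
        (Set.union_subset_union_left _ Set.subset_union_left))
    · refine ht.mono (Set.union_subset_union_left _ ?_)
      rintro x (hx | hx)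
      · exact Or.inl (Or.inr hx)
      · exact Or.inr hx
end
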